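/- Let x be a decision node and i a buyer. If the greedy demand of buyer i is the entire remaining supply, κ_i(x) = t, then the threshold price is strictly greater than the baseline price: p_i(x) > β_i(x). -/

import Mathlib

open Finset

noncomputable section

/-- The opponent of buyer `i`. -/
def other (i : Fin 2) : Fin 2 := 1 - i

/-- The standard unit vector of buyer `i`: winning one item moves `x` to `x + e i`. -/
def e (i : Fin 2) : Fin 2 → ℕ := Pi.single i 1

/-- Remaining supply `t(x) = T - x₁ - x₂` at node `x`. -/
def supply (T : ℕ) (x : Fin 2 → ℕ) : ℕ := T - (x 0 + x 1)

/-- `x` is a decision node: `x₁ + x₂ < T`. -/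
def IsDecision (T : ℕ) (x : Fin 2 → ℕ) : Prop := x 0 + x 1 < T

/-- Incremental value `v_i(k|x) = v_i(x_i + k)`. -/
def val (v : Fin 2 → ℕ → ℝ) (i : Fin 2) (k : ℕ) (x : Fin 2 → ℕ) : ℝ := v i (x i + k)

/-- Valuations are nonnegative and weakly decreasing. -/
def Admissible (v : Fin 2 → ℕ → ℝ) : Prop := ∀ i k, 0 ≤ v i k ∧ v i (k + 1) ≤ v i k

/-- Greedy payoff `μ̄_i(k|x) = Σ_{j=1}^k v_i(j|x) - k · v_{-i}(t-k+1|x)`. -/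
def gbar (T : ℕ) (v : Fin 2 → ℕ → ℝ) (i : Fin 2) (k : ℕ) (x : Fin 2 → ℕ) : ℝ :=
  (∑ j ∈ Finset.Icc 1 k, val v i j x) - (k : ℝ) * val v (other i) (supply T x - k + 1) x

/-- Greedy utility `μ_i(x) = max_{0 ≤ k ≤ t} μ̄_i(k|x)` (equal to `0` at terminal nodes). -/
def gu (T : ℕ) (v : Fin 2 → ℕ → ℝ) (i : Fin 2) (x : Fin 2 → ℕ) : ℝ :=
  Finset.sup' (Finset.range (supply T x + 1)) ⟨0, Finset.mem_range.mpr (Nat.succ_pos _)⟩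
    (fun k => gbar T v i k x)

/-- Greedy demand `κ_i(x)`: the least `k ∈ {0,…,t}` attaining the greedy utility. -/
def gd (T : ℕ) (v : Fin 2 → ℕ → ℝ) (i : Fin 2) (x : Fin 2 → ℕ) : ℕ :=
  sInf {k | k ≤ supply T x ∧ gbar T v i k x = gu T v i x}

/-- Duopsony factor `f_i(x) = max ({k ∈ {1,…,t} : v_i(k|x) > v_{-i}(t-k+1|x)} ∪ {0})`. -/
def df (T : ℕ) (v : Fin 2 → ℕ → ℝ) (i : Fin 2) (x : Fin 2 → ℕ) : ℕ :=
  sSup {k | 1 ≤ k ∧ k ≤ supply T x ∧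
    val v (other i) (supply T x - k + 1) x < val v i k x}

/-- Baseline price `β_i(x)`. -/
def base (T : ℕ) (v : Fin 2 → ℕ → ℝ) (i : Fin 2) (x : Fin 2 → ℕ) : ℝ :=
  if df T v i x = 0 then val v i 1 x
  else val v (other i) (supply T x - gd T v i x + 1) x

/-- Threshold price `p_i(x) = v_i(1|x) + μ_i(x+e_i) - μ_i(x+e_{-i})`. -/
def tp (T : ℕ) (v : Fin 2 → ℕ → ℝ) (i : Fin 2) (x : Fin 2 → ℕ) : ℝ :=
  val v i 1 x + gu T v i (x + e i) - gu T v i (x + e (other i))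

/-!
Since `κ_i(x) = t ≥ 1`, the payoff `μ̄_i(t|x) = μ_i(x)` strictly beats `μ̄_i(0|x) = 0`. This
forces `f_i(x) > 0`, because `f_i(x) = 0` makes every `μ̄_i(k|x)` nonpositive; hence
`β_i(x) = v_{-i}(1|x)`. At `x + e_{-i}` only the opponent's bids shift, so `μ_i(x + e_{-i})` is
a maximum of payoffs `μ̄_i(k|x)` with `k < t`, each strictly below `μ_i(x)`. At `x + e_i`,
buying the remaining `t - 1` items gives `μ_i(x + e_i) ≥ μ_i(x) - v_i(1|x) + v_{-i}(1|x)`.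
Adding the two bounds yields `p_i(x) > v_{-i}(1|x)`.
-/

lemma sum_Icc_one_succ {M : Type*} [AddCommMonoid M] (f : ℕ → M) (k : ℕ) :
    ∑ j ∈ Icc 1 (k + 1), f j = f 1 + ∑ j ∈ Icc 1 k, f (j + 1) := by
  rw [← Ico_add_one_right_eq_Icc, ← Ico_add_one_right_eq_Icc,
    sum_eq_sum_Ico_succ_bot (by omega), sum_Ico_add' f 1 (k + 1) 1]

lemma Admissible.antitone {v : Fin 2 → ℕ → ℝ} (hv : Admissible v) (j : Fin 2) :
    Antitone (v j) :=
  antitone_nat_of_succ_le fun k => (hv j k).2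

lemma other_ne_self (i : Fin 2) : other i ≠ i := by
  fin_cases i <;> decide

lemma supply_add_e (T : ℕ) (x : Fin 2 → ℕ) (j : Fin 2) :
    supply T (x + e j) = supply T x - 1 := by
  fin_cases j <;> simp [supply, e] <;> omega

lemma val_add_e_self (v : Fin 2 → ℕ → ℝ) (j : Fin 2) (k : ℕ) (x : Fin 2 → ℕ) :
    val v j k (x + e j) = val v j (k + 1) x := by
  simp only [_root_.val, e, Pi.add_apply, Pi.single_eq_same]
  ring_nf

lemma val_add_e_of_ne (v : Fin 2 → ℕ → ℝ) {j l : Fin 2} (h : j ≠ l) (k : ℕ)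
    (x : Fin 2 → ℕ) : val v j k (x + e l) = val v j k x := by
  simp only [_root_.val, e, Pi.add_apply, Pi.single_eq_of_ne h, add_zero]

section Greedy

variable (T : ℕ) (v : Fin 2 → ℕ → ℝ) (i : Fin 2) (x : Fin 2 → ℕ)

lemma gbar_zero : gbar T v i 0 x = 0 := by
  simp [gbar]

variable {T v i x}

lemma gbar_le_gu {k : ℕ} (hk : k ≤ supply T x) : gbar T v i k x ≤ gu T v i x :=
  le_sup' (fun k => gbar T v i k x) (mem_range.mpr (Nat.lt_succ_of_le hk))

lemma gd_le_supply_and_gbar_gd_eq_gu :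
    gd T v i x ≤ supply T x ∧ gbar T v i (gd T v i x) x = gu T v i x := by
  obtain ⟨k, hk, hmax⟩ := exists_mem_eq_sup' nonempty_range_add_one (fun k => gbar T v i k x)
  exact Nat.sInf_mem (s := {k | k ≤ supply T x ∧ gbar T v i k x = gu T v i x})
    ⟨k, Nat.le_of_lt_succ (mem_range.mp hk), hmax.symm⟩

lemma gbar_lt_gu_of_lt_gd {k : ℕ} (hk : k < gd T v i x) : gbar T v i k x < gu T v i x := by
  have hk' : k ≤ supply T x := (hk.trans_le gd_le_supply_and_gbar_gd_eq_gu.1).le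
  refine (gbar_le_gu hk').lt_of_ne fun heq => ?_
  exact hk.not_ge (Nat.sInf_le ⟨hk', heq⟩)

lemma gbar_nonpos_of_df_eq_zero (hv : Admissible v) (hdf : df T v i x = 0) {k : ℕ}
    (hk : k ≤ supply T x) : gbar T v i k x ≤ 0 := by
  have hbdd : BddAbove {k | 1 ≤ k ∧ k ≤ supply T x ∧
      val v (other i) (supply T x - k + 1) x < val v i k x} := ⟨supply T x, fun _ h => h.2.1⟩
  have hbid : ∀ j ∈ Icc 1 k, val v i j x ≤ val v (other i) (supply T x - k + 1) x := by
    intro j hj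
    rw [mem_Icc] at hj
    refine le_trans (not_lt.mp fun hlt => ?_) (hv.antitone _ (by omega : x (other i) +
      (supply T x - k + 1) ≤ x (other i) + (supply T x - j + 1)))
    have := le_csSup hbdd ⟨hj.1, hj.2.trans hk, hlt⟩
    rw [← df, hdf] at this
    omega
  have hsum := sum_le_sum hbid
  rw [sum_const, Nat.card_Icc, Nat.add_sub_cancel, nsmul_eq_mul] at hsum
  rw [gbar]
  linarith

lemma gd_eq_zero_of_df_eq_zero (hv : Admissible v) (hdf : df T v i x = 0) :
    gd T v i x = 0 := by
  have hgu : gu T v i x = 0 :=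
    le_antisymm (sup'_le _ _ fun k hk => gbar_nonpos_of_df_eq_zero hv hdf
      (Nat.le_of_lt_succ (mem_range.mp hk))) (gbar_zero T v i x ▸ gbar_le_gu (Nat.zero_le _))
  exact Nat.sInf_eq_zero.mpr (Or.inl ⟨Nat.zero_le _, by rw [hgu, gbar_zero]⟩)

lemma gbar_add_e_other {k : ℕ} (hk : k < supply T x) :
    gbar T v i k (x + e (other i)) = gbar T v i k x := by
  have hprice : supply T (x + e (other i)) - k + 1 = supply T x - k := by
    rw [supply_add_e]; omega
  simp only [gbar, val_add_e_of_ne v (other_ne_self i).symm, hprice, val_add_e_self]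

lemma gbar_add_e_self {k : ℕ} (hk : k < supply T x) :
    gbar T v i k (x + e i) =
      gbar T v i (k + 1) x - val v i 1 x + val v (other i) (supply T x - k) x := by
  have hprice : supply T (x + e i) - k + 1 = supply T x - k := by
    rw [supply_add_e]; omega
  have hprice' : supply T x - (k + 1) + 1 = supply T x - k := by omega
  simp only [gbar, val_add_e_self, val_add_e_of_ne v (other_ne_self i), hprice, hprice',
    sum_Icc_one_succ]
  push_cast
  ring

end Greedy

/-- If the greedy demand is the entire remaining supply, the threshold price is
strictly greater than the baseline price. -/
theorem stmt6 (T : ℕ) (v : Fin 2 → ℕ → ℝ) (hv : Admissible v)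
    (x : Fin 2 → ℕ) (hx : IsDecision T x) (i : Fin 2)
    (h : gd T v i x = supply T x) :
    base T v i x < tp T v i x := by
  obtain ⟨s, hs⟩ : ∃ s, supply T x = s + 1 :=
    ⟨supply T x - 1, by unfold supply IsDecision at *; omega⟩
  have hdf : df T v i x ≠ 0 := fun hdf => by
    have := gd_eq_zero_of_df_eq_zero hv hdf
    omega
  have hbase : base T v i x = val v (other i) 1 x := by
    rw [base, if_neg hdf, h, Nat.sub_self]
  have hgu : gbar T v i (s + 1) x = gu T v i x := hs ▸ h ▸ gd_le_supply_and_gbar_gd_eq_gu.2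
  have hdrop : gu T v i (x + e (other i)) < gu T v i x :=
    sup'_lt_iff _ |>.mpr fun k hk => by
      rw [supply_add_e, mem_range] at hk
      rw [gbar_add_e_other (by omega)]
      exact gbar_lt_gu_of_lt_gd (by omega)
  have hgain : gu T v i x - val v i 1 x + val v (other i) 1 x ≤ gu T v i (x + e i) := by
    have hstep := gbar_add_e_self (T := T) (v := v) (i := i) (x := x) (k := s) (by omega)
    rw [show supply T x - s = 1 by omega, hgu] at hstep
    rw [← hstep]
    exact gbar_le_gu (by rw [supply_add_e]; omega)
  rw [tp, hbase]
  linarith
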